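/- For vectors a₃, a₃' ∈ ℝ⁴ spanning a 2-dimensional subspace and any vector w ∈ ℝ⁴, the following norm identity holds: ‖[a₃ : a₃' : [a₃ : a₃' : w]]‖² = ‖[a₃ : a₃' : w]‖² · (‖a₃‖²‖a₃'‖² - (a₃·a₃')²), where [x : y : z] denotes the vector in ℝ⁴ with i-th component Σ_{j,k,l} ε_{ijkl} x_j y_k z_l (the 4-dimensional triple cross product). -/

import Mathlib

open Matrix
open scoped RealInnerProductSpace

/-- The Levi-Civita symbol `ε_{jkli}` on four indices. -/
noncomputable def eps (i j k l : Fin 4) : ℝ :=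
  Matrix.det (Matrix.of
    ![(Pi.single j (1:ℝ) : Fin 4 → ℝ), Pi.single k 1, Pi.single l 1, Pi.single i 1])

/-- The four-dimensional triple cross product `[x : y : z]`. -/
noncomputable def tripleCross (x y z : EuclideanSpace ℝ (Fin 4)) :
    EuclideanSpace ℝ (Fin 4) :=
  WithLp.toLp 2 (fun i => ∑ j, ∑ k, ∑ l, eps i j k l * x j * y k * z l)


/-!
The Levi-Civita symbol `eps i j k l` is the determinant with unit rows `e j, e k, e l, e i`, so
multilinearity of the determinant gives `⟪[x : y : z], v⟫ = det (x, y, z, v)`. Hence `[x : y : z]`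
is orthogonal to `x` and `y`, and its coordinates are signed `3 × 3` minors (Laplace expansion along
the unit row), which makes `⟪[x : y : z], [p : q : r]⟫` the Gram determinant of `(x, y, z)`
against `(p, q, r)` (Cauchy–Binet). For `u = [a : a' : w]`, orthogonal to `a` and `a'`, the Gram
matrix of `(a, a', u)` is block diagonal, and its determinant is `‖u‖² (‖a‖²‖a'‖² - ⟪a, a'⟫²)`.
-/

theorem Fintype.sum_fin_succ_pi {α M : Type*} [Fintype α] [AddCommMonoid M] {n : ℕ}
    (f : (Fin (n + 1) → α) → M) :
    ∑ r, f r = ∑ a, ∑ r : Fin n → α, f (vecCons a r) :=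
  ((Fintype.sum_equiv (Fin.consEquiv fun _ => α) _ _ fun _ => rfl).symm).trans
    (Fintype.sum_prod_type _)

theorem Matrix.det_eq_sum_prod_mul_det_single {R : Type*} [CommRing R] {n : Type*}
    [Fintype n] [DecidableEq n] (M : Matrix n n R) :
    M.det = ∑ r : n → n, (∏ i, M i (r i)) * (of fun i => (Pi.single (r i) 1 : n → R)).det := by
  have key := (detRowAlternating (R := R) (n := n)).toMultilinearMap.map_sum
    (fun i j => M i j • (Pi.single j 1 : n → R))
  simp only [AlternatingMap.coe_multilinearMap, AlternatingMap.map_smul_univ, smul_eq_mul] at key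
  calc M.det = det (of fun i => ∑ j, M i j • (Pi.single j 1 : n → R)) := by
        congr; ext i k; simp [Pi.single_apply]
    _ = _ := key

theorem inner_tripleCross_eq_det (x y z v : EuclideanSpace ℝ (Fin 4)) :
    ⟪tripleCross x y z, v⟫ = (of ![x.ofLp, y.ofLp, z.ofLp, v.ofLp]).det := by
  rw [det_eq_sum_prod_mul_det_single]
  simp only [Fintype.sum_fin_succ_pi, Fin.prod_univ_four, Fintype.sum_unique]
  have rows (a b c d : Fin 4) (r : Fin 0 → Fin 4) :
      (fun i => (Pi.single (vecCons a (vecCons b (vecCons c (vecCons d r))) i) 1 : Fin 4 → ℝ))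
        = ![Pi.single a 1, Pi.single b 1, Pi.single c 1, Pi.single d 1] := by
    ext i : 1; fin_cases i <;> rfl
  simp only [rows, tripleCross, eps, PiLp.inner_apply, RCLike.inner_apply, conj_trivial,
    Finset.mul_sum]
  rw [Finset.sum_comm]
  refine Finset.sum_congr rfl fun j _ => ?_
  rw [Finset.sum_comm]
  refine Finset.sum_congr rfl fun k _ => ?_
  rw [Finset.sum_comm]
  refine Finset.sum_congr rfl fun l _ => Finset.sum_congr rfl fun i _ => ?_
  simp only [of_apply, cons_val_zero, cons_val_one, cons_val]
  ring

theorem tripleCross_apply (x y z : EuclideanSpace ℝ (Fin 4)) (i : Fin 4) :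
    tripleCross x y z i =
      (-1) ^ (3 + i : ℕ) * (of fun a b => ![x.ofLp, y.ofLp, z.ofLp] a (i.succAbove b)).det := by
  have hcoord : tripleCross x y z i = ⟪tripleCross x y z, EuclideanSpace.single i 1⟫ := by
    simp [EuclideanSpace.inner_single_right]
  rw [hcoord, inner_tripleCross_eq_det, PiLp.ofLp_single]
  set M := of ![x.ofLp, y.ofLp, z.ofLp, Pi.single i 1]
  have hM : M.updateRow 3 (Pi.single i 1) = M := updateRow_eq_self M 3
  have hminor : M.submatrix (Fin.succAbove 3) i.succAbove =
      of fun a b => ![x.ofLp, y.ofLp, z.ofLp] a (i.succAbove b) := by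
    ext a b; fin_cases a <;> rfl
  rw [← hM, ← adjugate_apply, adjugate_fin_succ_eq_det_submatrix, hminor]
  rfl

theorem inner_tripleCross_tripleCross (x y z p q r : EuclideanSpace ℝ (Fin 4)) :
    ⟪tripleCross x y z, tripleCross p q r⟫ =
      !![⟪x, p⟫, ⟪x, q⟫, ⟪x, r⟫; ⟪y, p⟫, ⟪y, q⟫, ⟪y, r⟫; ⟪z, p⟫, ⟪z, q⟫, ⟪z, r⟫].det := by
  simp only [PiLp.inner_apply, RCLike.inner_apply, conj_trivial, Fin.sum_univ_four,
    tripleCross_apply, det_fin_three, of_apply, cons_val, Fin.succAbove, Fin.reduceLT,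
    Fin.reduceCastSucc, Fin.reduceSucc, ↓reduceIte, Fin.coe_ofNat_eq_mod, Nat.reduceMod]
  ring

theorem inner_tripleCross_fst (x y z : EuclideanSpace ℝ (Fin 4)) : ⟪tripleCross x y z, x⟫ = 0 := by
  rw [inner_tripleCross_eq_det]
  exact det_zero_of_row_eq (i := 0) (j := 3) (by decide) rfl

theorem inner_tripleCross_snd (x y z : EuclideanSpace ℝ (Fin 4)) : ⟪tripleCross x y z, y⟫ = 0 := by
  rw [inner_tripleCross_eq_det]
  exact det_zero_of_row_eq (i := 1) (j := 3) (by decide) rfl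

theorem norm_tripleCross_sq_of_inner_eq_zero {x y u : EuclideanSpace ℝ (Fin 4)}
    (hx : ⟪u, x⟫ = 0) (hy : ⟪u, y⟫ = 0) :
    ‖tripleCross x y u‖ ^ 2 = ‖u‖ ^ 2 * (‖x‖ ^ 2 * ‖y‖ ^ 2 - ⟪x, y⟫ ^ 2) := by
  have hx' : ⟪x, u⟫ = 0 := by rwa [real_inner_comm]
  have hy' : ⟪y, u⟫ = 0 := by rwa [real_inner_comm]
  rw [← real_inner_self_eq_norm_sq, inner_tripleCross_tripleCross, det_fin_three]
  simp only [of_apply, cons_val, hx, hx', hy, hy', real_inner_comm x y, real_inner_self_eq_norm_sq]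
  ring

theorem stmt13_general (a₃ a₃' w : EuclideanSpace ℝ (Fin 4)) :
    ‖tripleCross a₃ a₃' (tripleCross a₃ a₃' w)‖ ^ 2
      = ‖tripleCross a₃ a₃' w‖ ^ 2
        * (‖a₃‖ ^ 2 * ‖a₃'‖ ^ 2 - ⟪a₃, a₃'⟫ ^ 2) :=
  norm_tripleCross_sq_of_inner_eq_zero (inner_tripleCross_fst a₃ a₃' w)
    (inner_tripleCross_snd a₃ a₃' w)

theorem stmt13 (a₃ a₃' w : EuclideanSpace ℝ (Fin 4))
    (hli : LinearIndependent ℝ ![a₃, a₃']) :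
    ‖tripleCross a₃ a₃' (tripleCross a₃ a₃' w)‖ ^ 2
      = ‖tripleCross a₃ a₃' w‖ ^ 2
        * (‖a₃‖ ^ 2 * ‖a₃'‖ ^ 2 - ⟪a₃, a₃'⟫ ^ 2) :=
  stmt13_general a₃ a₃' w
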